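/- arXiv:1309.0496 — 2 statements merged into one kernel-verified Lean document; each statement's English description precedes it below -/
import Mathlib

section
/- For integers s ≥ 5, h, k satisfying 2h(s-1) + k(s+1) = 2s, the inequality -8 ≤ (2h-1)²(2s-2) + 2(2k-1)(2h-1)(s+1) ≤ 0 has no solutions. -/
/-!
Substituting the slope equation, the expression becomes `2u((s+1) - (s-1)u)` with `u = 2h - 1`
odd. For `u = 1` it equals `4 > 0`; for `u ≥ 3` the second factor is at most `4 - 2s`, and for
`u ≤ -1` it is at least `2s`, so in both cases the product is below `-8` once `s ≥ 3`.
-/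

lemma wall_expr_eq_of_slope {s h k : ℤ} (hslope : 2 * h * (s - 1) + k * (s + 1) = 2 * s) :
    (2*h - 1)^2 * (2*s - 2) + 2 * (2*k - 1) * (2*h - 1) * (s + 1)
      = 2 * (2*h - 1) * ((s + 1) - (s - 1) * (2*h - 1)) := by
  linear_combination (4 * (2*h - 1)) * hslope

lemma two_mul_mul_sub_lt_of_three_le {s u : ℤ} (hs : 3 ≤ s) (hu : 3 ≤ u) :
    2 * u * ((s + 1) - (s - 1) * u) < -8 := by
  have hfactor : (s + 1) - (s - 1) * u ≤ -2 := by nlinarith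
  nlinarith

lemma two_mul_mul_sub_lt_of_neg {s u : ℤ} (hs : 3 ≤ s) (hu : u < 0) :
    2 * u * ((s + 1) - (s - 1) * u) < -8 := by
  have hfactor : 6 ≤ (s + 1) - (s - 1) * u := by nlinarith
  nlinarith

lemma two_mul_mul_sub_notMem_Icc {s u : ℤ} (hs : 3 ≤ s) (hu : Odd u) :
    2 * u * ((s + 1) - (s - 1) * u) ∉ Set.Icc (-8) 0 := by
  rintro ⟨hlo, hhi⟩
  obtain ⟨m, rfl⟩ := hu
  rcases lt_trichotomy m 0 with hm | rfl | hm
  · linarith [two_mul_mul_sub_lt_of_neg hs (by omega : 2 * m + 1 < 0)]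
  · norm_num at hhi
  · linarith [two_mul_mul_sub_lt_of_three_le hs (by omega : 3 ≤ 2 * m + 1)]

/-- Arithmetic core of the "no walls" lemma: for integers `s ≥ 5`, `h`, `k` with
`2h(s-1) + k(s+1) = 2s`, the inequality
`-8 ≤ (2h-1)²(2s-2) + 2(2k-1)(2h-1)(s+1) ≤ 0` has no solutions. -/
theorem no_walls_arith (s h k : ℤ) (hs : 5 ≤ s)
    (hslope : 2 * h * (s - 1) + k * (s + 1) = 2 * s) :
    ¬ (-8 ≤ (2*h - 1)^2 * (2*s - 2) + 2 * (2*k - 1) * (2*h - 1) * (s + 1) ∧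
        (2*h - 1)^2 * (2*s - 2) + 2 * (2*k - 1) * (2*h - 1) * (s + 1) ≤ 0) := by
  rw [wall_expr_eq_of_slope hslope]
  exact two_mul_mul_sub_notMem_Icc (by omega) ⟨h - 1, by ring⟩
end

section
/- Let s ≥ 5 be an integer. There are no integers n, m with 2n²(s-1) + 2nm(s+1) = 0 and 2n(s-1) + m(s+1) = 2. -/
/-- No hyperelliptic case: for an integer `s ≥ 5` there are no integers `n, m` with
`2n²(s-1) + 2nm(s+1) = 0` and `2n(s-1) + m(s+1) = 2`. -/
theorem no_hyperelliptic (s : ℤ) (hs : 5 ≤ s) :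
    ¬ ∃ n m : ℤ, 2 * n^2 * (s - 1) + 2 * n * m * (s + 1) = 0 ∧
        2 * n * (s - 1) + m * (s + 1) = 2 := by
  rintro ⟨n, m, h1, h2⟩
  have hle : s + 1 ≤ 2 := by
    apply Int.le_of_dvd (by norm_num)
    rcases eq_or_ne n 0 with h | h
    · subst h
      exact ⟨m, by linarith [h2]⟩
    · have key : n * (s - 1) + m * (s + 1) = 0 := by
        have : 2 * n * (n * (s - 1) + m * (s + 1)) = 0 := by ring_nf; linarith [h1]
        rcases mul_eq_zero.mp this with h' | h'
        · exact absurd (by omega : n = 0) h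
        · exact h'
      exact ⟨-m, by linarith⟩
  linarith
end
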